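/- Let ψ : [2, ∞) → ℝ and define Ψ(x) = ψ(x)/log(x) + ∫₂^x ψ(t)/(t (log t)²) dt. Suppose there are constants C > 0, c > 0, and an integer n ≥ 1 such that |ψ(t)| ≤ C n³ t exp(−c log t / (n⁴ (√(log t) + n³))) for all t ≥ 2. Then there exist constants C' , c' > 0 depending only on C and c (not on n or x) such that |Ψ(x)| ≤ C' n³ x exp(−c' log x / (n⁴ (√(log x) + n³))) for all x ≥ 2. -/

import Mathlib

open Real intervalIntegral

/-!
On `[2, x]` the zero-free-region denominator `n⁴ (√(log t) + n³)` is largest at `t = x`, so the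
assumed bound on `ψ` gives `|ψ t| ≤ C n³ t · t^(-δ)` with the single exponent
`δ = min c (1/2) / (n⁴ (√(log x) + n³)) ≤ 1/2`. Integrating `t^(-δ)` against
`1 / log² t ≤ 1 / log² 2` costs at most a factor `1 / (1 - δ) ≤ 2`, and `x · x^(-δ)` is exactly the claimed decay with
`c' = min c (1/2)`.
-/

theorem integral_rpow_neg_le {a b δ : ℝ} (ha : 0 ≤ a) (hab : a ≤ b) (hδ : δ < 1) :
    ∫ t in a..b, t ^ (-δ) ≤ b * b ^ (-δ) / (1 - δ) := by
  rw [integral_rpow (Or.inl (by linarith)), rpow_add_one' (ha.trans hab) (by linarith),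
    mul_comm b, show -δ + 1 = 1 - δ by ring]
  gcongr
  linarith [rpow_nonneg ha (1 - δ)]

theorem exp_neg_mul_log_div_le_rpow_neg {c d c' d' t : ℝ} (h : c' / d' ≤ c / d) (ht : 1 ≤ t) :
    exp (-c * log t / d) ≤ t ^ (-(c' / d')) := by
  rw [rpow_def_of_pos (by linarith), exp_le_exp]
  have hmul := mul_le_mul_of_nonneg_right h (log_nonneg ht)
  linarith [show -c * log t / d = -(c / d * log t) by ring]

theorem abs_div_log_add_integral_le {ψ : ℝ → ℝ} {M δ x : ℝ} (hM : 0 ≤ M)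
    (hδ : δ ≤ 1 / 2) (hx : 2 ≤ x) (hψ : ∀ t ∈ Set.Icc 2 x, |ψ t| ≤ M * t * t ^ (-δ)) :
    |ψ x / log x + ∫ t in (2:ℝ)..x, ψ t / (t * log t ^ 2)|
      ≤ (1 / log 2 + 2 / log 2 ^ 2) * M * (x * x ^ (-δ)) := by
  have hlog2 : 0 < log 2 := log_pos one_lt_two
  have hlog : ∀ t, 2 ≤ t → log 2 ≤ log t := fun t ht => log_le_log two_pos ht
  have hx0 : 0 < x := by linarith
  have hfirst : |ψ x / log x| ≤ M * (x * x ^ (-δ)) / log 2 := by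
    rw [abs_div, abs_of_pos (hlog2.trans_le (hlog x hx)), ← mul_assoc]
    exact div_le_div₀ (by positivity) (hψ x ⟨hx, le_rfl⟩) hlog2 (hlog x hx)
  have hintegrand :
      ∀ t ∈ Set.Ioc 2 x, ‖ψ t / (t * log t ^ 2)‖ ≤ M / log 2 ^ 2 * t ^ (-δ) := by
    rintro t ⟨h2t, htx⟩
    have ht : 0 < t := by linarith
    have hlogt : log 2 ≤ log t := hlog t h2t.le
    have hden : 0 < t * log t ^ 2 := by have := hlog2.trans_le hlogt; positivity
    rw [Real.norm_eq_abs, abs_div, abs_of_pos hden]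
    calc |ψ t| / (t * log t ^ 2) ≤ M * t * t ^ (-δ) / (t * log 2 ^ 2) := by
          gcongr
          exact hψ t ⟨h2t.le, htx⟩
      _ = M / log 2 ^ 2 * t ^ (-δ) := by field_simp
  have hsecond :
      |∫ t in (2:ℝ)..x, ψ t / (t * log t ^ 2)| ≤ M / log 2 ^ 2 * (2 * (x * x ^ (-δ))) :=
    calc _ ≤ ∫ t in (2:ℝ)..x, M / log 2 ^ 2 * t ^ (-δ) :=
          norm_integral_le_of_norm_le hx (Filter.Eventually.of_forall hintegrand)
            ((intervalIntegrable_rpow' (by linarith)).const_mul _)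
      _ = M / log 2 ^ 2 * ∫ t in (2:ℝ)..x, t ^ (-δ) := integral_const_mul _ _
      _ ≤ M / log 2 ^ 2 * (x * x ^ (-δ) / (1 - δ)) := by
          gcongr
          exact integral_rpow_neg_le zero_le_two hx (by linarith)
      _ ≤ M / log 2 ^ 2 * (2 * (x * x ^ (-δ))) := by
          gcongr
          rw [div_le_iff₀ (by linarith)]
          nlinarith [show 0 < x * x ^ (-δ) by positivity]
  calc _ ≤ |ψ x / log x| + |∫ t in (2:ℝ)..x, ψ t / (t * log t ^ 2)| := abs_add_le _ _
    _ ≤ M * (x * x ^ (-δ)) / log 2 + M / log 2 ^ 2 * (2 * (x * x ^ (-δ))) :=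
        add_le_add hfirst hsecond
    _ = _ := by ring

theorem abel_summation_transfer (C c : ℝ) (hC : 0 < C) (hc : 0 < c) :
    ∃ C' c' : ℝ, 0 < C' ∧ 0 < c' ∧
      ∀ (ψ : ℝ → ℝ) (n : ℕ), 1 ≤ n →
        (∀ t : ℝ, 2 ≤ t →
          |ψ t| ≤ C * (n : ℝ) ^ 3 * t *
            Real.exp (-c * Real.log t / ((n : ℝ) ^ 4 * (Real.sqrt (Real.log t) + (n : ℝ) ^ 3)))) →
        ∀ x : ℝ, 2 ≤ x →
          |ψ x / Real.log x + ∫ t in (2:ℝ)..x, ψ t / (t * Real.log t ^ 2)|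
            ≤ C' * (n : ℝ) ^ 3 * x *
                Real.exp (-c' * Real.log x /
                  ((n : ℝ) ^ 4 * (Real.sqrt (Real.log x) + (n : ℝ) ^ 3))) := by
  refine ⟨(1 / log 2 + 2 / log 2 ^ 2) * C, min c (1 / 2), by positivity,
    lt_min hc one_half_pos, ?_⟩
  intro ψ n hn hψ x hx
  set c' := min c (1 / 2)
  set D : ℝ → ℝ := fun u => (n : ℝ) ^ 4 * (√u + (n : ℝ) ^ 3) with hD
  have hn1 : (1 : ℝ) ≤ n := by exact_mod_cast hn
  have hD_one : ∀ u, 1 ≤ D u := fun u => one_le_mul_of_one_le_of_one_le (one_le_pow₀ hn1)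
    (by linarith [sqrt_nonneg u, one_le_pow₀ (n := 3) hn1])
  have hD_mono : Monotone D := fun u v huv => by simp only [hD]; gcongr
  have hδ : c' / D (log x) ≤ 1 / 2 :=
    (div_le_self (by positivity) (hD_one _)).trans (min_le_right _ _)
  have hψ' : ∀ t ∈ Set.Icc 2 x, |ψ t| ≤ C * n ^ 3 * t * t ^ (-(c' / D (log x))) := by
    rintro t ⟨h2t, htx⟩
    refine (hψ t h2t).trans (mul_le_mul_of_nonneg_left
      (exp_neg_mul_log_div_le_rpow_neg ?_ (by linarith)) (by positivity))
    exact div_le_div₀ hc.le (min_le_left _ _) (by linarith [hD_one (log t)])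
      (hD_mono (log_le_log (by linarith) htx))
  have hx_rpow : x ^ (-(c' / D (log x))) = exp (-c' * log x / D (log x)) := by
    rw [rpow_def_of_pos (by linarith)]
    ring_nf
  calc _ ≤ (1 / log 2 + 2 / log 2 ^ 2) * (C * n ^ 3) * (x * x ^ (-(c' / D (log x)))) :=
        abs_div_log_add_integral_le (by positivity) hδ hx hψ'
    _ = _ := by
        rw [hx_rpow]
        ring
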